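/- Let A ∈ ℝ^{m×n} have unit-norm rows and let x* satisfy A x* ≤ b. For any y ∈ ℝ^n, under the β-sampling scheme selecting the most violated constraint i* in the sample, one has (1/m)‖(Ay − b)^+‖² ≤ ‖y − x*‖² − E[‖P_{a_{i*}, b_{i*}}(y) − x*‖²], where P_{a_{i*}, b_{i*}}(y) = y − (a_{i*}^T y − b_{i*})^+ a_{i*} is the projection of y onto the halfspace {x : a_{i*}^T x ≤ b_{i*}}. -/

import Mathlib

noncomputable section
open Matrix Finset

/-! Projecting `y` onto a halfspace containing `x*` decreases `‖y - x*‖²` by at least the squared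
residual, so the right-hand side is at least the expected squared residual of the selected row.
The selected row is the maximum of a random `β`-subset, whose law `C(j, β-1) / C(m, β)` on sorted
positions `j` is increasing in `j`; by Chebyshev's sum inequality the expectation of the increasing
sequence of sorted squared residuals under it dominates their plain mean. -/

/-- Positive residual `(aᵢᵀy − bᵢ)⁺` of row `i` of the system `Ax ≤ b` at `y`. -/
def res {m n : ℕ} (A : Matrix (Fin m) (Fin n) ℝ) (b : Fin m → ℝ) (y : Fin n → ℝ)
    (i : Fin m) : ℝ :=
  max (A.mulVec y i - b i) 0

theorem Nat.sum_range_choose_eq_choose_succ (m k : ℕ) :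
    ∑ i ∈ range m, i.choose k = m.choose (k + 1) := by
  induction m with
  | zero => simp
  | succ m ih => rw [sum_range_succ, ih, Nat.choose_succ_succ', add_comm]

theorem sum_fin_choose_pred {m β : ℕ} (hβ : 1 ≤ β) :
    ∑ j : Fin m, ((j : ℕ).choose (β - 1) : ℝ) = m.choose β := by
  rw [← Nat.cast_sum, Fin.sum_univ_eq_sum_range (fun j => j.choose (β - 1)),
    Nat.sum_range_choose_eq_choose_succ, Nat.sub_add_cancel hβ]

theorem Monotone.choose_mul_sum_le_mul_sum_choose_mul {m β : ℕ} (hβ : 1 ≤ β) {g : Fin m → ℝ}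
    (hg : Monotone g) :
    (m.choose β : ℝ) * ∑ j, g j ≤ m * ∑ j : Fin m, ((j : ℕ).choose (β - 1) : ℝ) * g j := by
  have hw : Monotone fun j : Fin m => ((j : ℕ).choose (β - 1) : ℝ) :=
    fun i j hij => Nat.cast_le.mpr (Nat.choose_le_choose _ hij)
  simpa only [sum_fin_choose_pred hβ, Fintype.card_fin] using
    (hw.monovary hg).sum_mul_sum_le_card_mul_sum

theorem pred_add_lt {m β : ℕ} (hβ : 1 ≤ β) (hβm : β ≤ m) (k : Fin (m - β + 1)) :
    β - 1 + k.val < m := by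
  have := k.isLt; omega

theorem sum_choose_mul_shift {m β : ℕ} (hβ : 1 ≤ β) (hβm : β ≤ m) (F : Fin m → ℝ) :
    ∑ k : Fin (m - β + 1), ((β - 1 + k.val).choose (β - 1) : ℝ) *
        F ⟨β - 1 + k.val, pred_add_lt hβ hβm k⟩ =
      ∑ j : Fin m, ((j : ℕ).choose (β - 1) : ℝ) * F j := by
  refine sum_of_injOn (fun k => ⟨β - 1 + k.val, pred_add_lt hβ hβm k⟩)
    (fun k _ l _ hkl => Fin.ext (by simpa using congrArg Fin.val hkl))
    (fun _ _ => mem_univ _) (fun j _ hj => ?_) (fun _ _ => rfl)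
  have hjβ : (j : ℕ) < β - 1 := by
    by_contra! h
    exact hj ⟨⟨j - (β - 1), by omega⟩, by simp, Fin.ext (by simp; omega)⟩
  simp [Nat.choose_eq_zero_of_lt hjβ]

theorem sum_sq_sub_max_smul_le {n : ℕ} (a y x : Fin n → ℝ) (c : ℝ) (ha : ∑ t, a t ^ 2 = 1)
    (hx : a ⬝ᵥ x ≤ c) :
    ∑ t, (y t - max (a ⬝ᵥ y - c) 0 * a t - x t) ^ 2 ≤
      (∑ t, (y t - x t) ^ 2) - max (a ⬝ᵥ y - c) 0 ^ 2 := by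
  set r := max (a ⬝ᵥ y - c) 0
  have hr : r * (a ⬝ᵥ y - c) = r ^ 2 := by
    rcases le_total (a ⬝ᵥ y - c) 0 with h | h
    · simp [r, max_eq_right h]
    · simp [r, max_eq_left h, sq]
  have hdist : a ⬝ᵥ y - c ≤ a ⬝ᵥ (y - x) := by rw [dotProduct_sub]; linarith
  have hexpand : ∑ t, (y t - r * a t - x t) ^ 2 =
      (∑ t, (y t - x t) ^ 2) - 2 * r * a ⬝ᵥ (y - x) + r ^ 2 * ∑ t, a t ^ 2 := by
    simp only [dotProduct, Pi.sub_apply, mul_sum, ← sum_sub_distrib, ← sum_add_distrib]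
    exact sum_congr rfl fun t _ => by ring
  rw [hexpand, ha]
  nlinarith [mul_le_mul_of_nonneg_left hdist (le_max_right (a ⬝ᵥ y - c) 0)]

/-- The sampling scheme is encoded by a sorting bijection `ord`: the expectation of `q(i*)` is
`(1/C(m,β)) Σ_{k=0}^{m−β} C(β−1+k, β−1) q(i_k)`, where `i_k = ord (β−1+k)` is the index of the
`(β+k)`-th smallest entry of `(Ay − b)⁺`. -/
theorem stmt2 {m n β : ℕ} (hβ : 1 ≤ β) (hβm : β ≤ m)
    (A : Matrix (Fin m) (Fin n) ℝ) (b : Fin m → ℝ) (y xstar : Fin n → ℝ)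
    (hrows : ∀ i, ∑ j, A i j ^ 2 = 1)
    (hxstar : ∀ i, A.mulVec xstar i ≤ b i)
    (ord : Fin m ≃ Fin m)
    (hord : ∀ j j' : Fin m, j ≤ j' → res A b y (ord j) ≤ res A b y (ord j')) :
    (1 / (m : ℝ)) * ∑ i, res A b y i ^ 2 ≤
      (∑ t, (y t - xstar t) ^ 2) -
        (1 / (m.choose β : ℝ)) *
          ∑ k : Fin (m - β + 1), ((β - 1 + k.val).choose (β - 1) : ℝ) *
            (∑ t, (y t - res A b y (ord ⟨β - 1 + k.val, by have := k.isLt; omega⟩) *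
                A (ord ⟨β - 1 + k.val, by have := k.isLt; omega⟩) t - xstar t) ^ 2) := by
  set D := ∑ t, (y t - xstar t) ^ 2
  set w : Fin m → ℝ := fun j => ((j : ℕ).choose (β - 1) : ℝ)
  have hm : (0 : ℝ) < m := by exact_mod_cast hβ.trans hβm
  have hC : (0 : ℝ) < m.choose β := by exact_mod_cast Nat.choose_pos hβm
  have hsq : Monotone fun j => res A b y (ord j) ^ 2 :=
    fun i j hij => pow_le_pow_left₀ (le_max_right _ _) (hord i j hij) 2
  rw [sum_choose_mul_shift hβ hβm
    (fun i => ∑ t, (y t - res A b y (ord i) * A (ord i) t - xstar t) ^ 2)]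
  calc (1 / (m : ℝ)) * ∑ i, res A b y i ^ 2
      = (∑ j, res A b y (ord j) ^ 2) / m := by rw [ord.sum_comp (fun i => res A b y i ^ 2)]; ring
    _ ≤ (∑ j, w j * res A b y (ord j) ^ 2) / m.choose β := by
      rw [div_le_div_iff₀ hm hC]
      linarith [hsq.choose_mul_sum_le_mul_sum_choose_mul hβ]
    _ = D - 1 / (m.choose β : ℝ) * ∑ j, w j * (D - res A b y (ord j) ^ 2) := by
      simp only [mul_sub, sum_sub_distrib, ← sum_mul, w, sum_fin_choose_pred hβ]
      field_simp
      ring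
    _ ≤ _ := by
      gcongr with j
      exact sum_sq_sub_max_smul_le _ y xstar _ (hrows _) (hxstar _)
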